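/- Machine evaluation preserves types: if ⊢ (S_A, M, K) : ε => !!t_I is a typed machine state and (S_A, M, K) makes a machine transition to (T_A, N, L), then ⊢ (T_A, N, L) : ε => !!t_I. -/

import Mathlib

variable {Loc Ch : Type}

/-- FMC terms: variable, push `[N]a.M`, pop `a<x>.M` (de Bruijn binder),
choice `i`, case `M ; i -> N`, and loop `M^i`. -/
inductive Tm (Loc Ch : Type) : Type where
  | var : ℕ → Tm Loc Ch
  | push : Tm Loc Ch → Loc → Tm Loc Ch → Tm Loc Ch
  | pop : Loc → Tm Loc Ch → Tm Loc Ch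
  | choice : Ch → Tm Loc Ch
  | caseOf : Tm Loc Ch → Ch → Tm Loc Ch → Tm Loc Ch
  | loop : Tm Loc Ch → Ch → Tm Loc Ch

namespace Tm

/-- Shift the free de Bruijn indices `≥ d` up by one. -/
def lift : Tm Loc Ch → ℕ → Tm Loc Ch
  | var n, d => if n < d then var n else var (n + 1)
  | push N a M, d => push (N.lift d) a (M.lift d)
  | pop a M, d => pop a (M.lift (d + 1))
  | choice i, _ => choice i
  | caseOf M i N, d => caseOf (M.lift d) i (N.lift d)
  | loop M i, d => loop (M.lift d) i

/-- Capture-avoiding substitution `{N/k}M` for the de Bruijn index `k`. -/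
def subst : Tm Loc Ch → ℕ → Tm Loc Ch → Tm Loc Ch
  | var n, k, N => if n = k then N else if n < k then var n else var (n - 1)
  | push P a M, k, N => push (P.subst k N) a (M.subst k N)
  | pop a M, k, N => pop a (M.subst (k + 1) (N.lift 0))
  | choice i, _, _ => choice i
  | caseOf M i P, k, N => caseOf (M.subst k N) i (P.subst k N)
  | loop M i, k, N => loop (M.subst k N) i

end Tm

variable [DecidableEq Loc]

/-- A memory: a family of stacks of terms indexed by the locations
(stacks are lists with the head as top). -/
def Mem (Loc Ch : Type) := Loc → List (Tm Loc Ch)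

/-- `S.push a N` pushes `N` onto the stack at location `a`. -/
def Mem.push (S : Mem Loc Ch) (a : Loc) (N : Tm Loc Ch) : Mem Loc Ch :=
  Function.update S a (N :: S a)

/-- The empty memory. -/
def Mem.empty : Mem Loc Ch := fun _ => []

/-- A continuation stack: a stack of conditional continuations `(i -> M)`. -/
abbrev CStack (Loc Ch : Type) := List (Ch × Tm Loc Ch)

/-- The transitions of the abstract machine on states `(S, M, K)`. -/
inductive MStep : Mem Loc Ch × Tm Loc Ch × CStack Loc Ch → Mem Loc Ch × Tm Loc Ch × CStack Loc Ch → Prop where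
  | push (S : Mem Loc Ch) (N : Tm Loc Ch) (a : Loc) (M : Tm Loc Ch) (K : CStack Loc Ch) :
      MStep (S, .push N a M, K) (S.push a N, M, K)
  | pop (S : Mem Loc Ch) (a : Loc) (N M : Tm Loc Ch) (K : CStack Loc Ch) :
      MStep (S.push a N, .pop a M, K) (S, M.subst 0 N, K)
  | select (S : Mem Loc Ch) (i : Ch) (M : Tm Loc Ch) (K : CStack Loc Ch) :
      MStep (S, .choice i, (i, M) :: K) (S, M, K)
  | reject (S : Mem Loc Ch) (i j : Ch) (M : Tm Loc Ch) (K : CStack Loc Ch) (h : i ≠ j) :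
      MStep (S, .choice i, (j, M) :: K) (S, .choice i, K)
  | caseOf (S : Mem Loc Ch) (N : Tm Loc Ch) (i : Ch) (M : Tm Loc Ch) (K : CStack Loc Ch) :
      MStep (S, .caseOf N i M, K) (S, N, (i, M) :: K)
  | loop (S : Mem Loc Ch) (M : Tm Loc Ch) (i : Ch) (K : CStack Loc Ch) :
      MStep (S, .loop M i, K) (S, M, (i, .loop M i) :: K)

/-- Types `!!s => !!t_I`: an implication from a memory type (family of stack
types indexed by locations) to a sum type (family of memory types indexed
by a set of choices, represented via `Option`). -/
inductive Ty (Loc Ch : Type) : Type where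
  | arr : (Loc → List (Ty Loc Ch)) → (Ch → Option (Loc → List (Ty Loc Ch))) → Ty Loc Ch

/-- Stack types: lists of types (head = top of stack). -/
abbrev StackTy (Loc Ch : Type) := List (Ty Loc Ch)

/-- Memory types: families of stack types indexed by locations. -/
abbrev MemTy (Loc Ch : Type) := Loc → StackTy Loc Ch

/-- Sum types: families of memory types indexed by a set of choices
(`T i = some m` means `i` is in the index set with memory type `m`). -/
abbrev SumTy (Loc Ch : Type) := Ch → Option (MemTy Loc Ch)

/-- The empty memory type `ε`. -/
def memNil : MemTy Loc Ch := fun _ => []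

/-- `memCons a r s` is `a(r)·!!s`: push the type `r` on top at location `a`. -/
def memCons [DecidableEq Loc] (a : Loc) (r : Ty Loc Ch) (s : MemTy Loc Ch) : MemTy Loc Ch :=
  Function.update s a (r :: s a)

/-- Pointwise concatenation of memory types (`r` on top of `s`). -/
def memApp (r s : MemTy Loc Ch) : MemTy Loc Ch := fun a => r a ++ s a

/-- The singleton sum type `!!m.i`. -/
def sumSingle [DecidableEq Ch] (i : Ch) (m : MemTy Loc Ch) : SumTy Loc Ch :=
  fun j => if j = i then some m else none

/-- Stack expansion of a sum type: place `s` underneath every summand. -/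
def sumExpand (s : MemTy Loc Ch) (T : SumTy Loc Ch) : SumTy Loc Ch :=
  fun i => (T i).map fun m => memApp m s

/-- `sumOver S T` is the sum `!!s_I + !!t_{J∖I}`: `S` overriding `T`. -/
def sumOver (S T : SumTy Loc Ch) : SumTy Loc Ch :=
  fun i => match S i with
    | some m => some m
    | none => T i

variable [DecidableEq Loc] [DecidableEq Ch]

/-- The typing judgement `Γ ⊢ M : t` of the simply-typed FMC with control,
with de Bruijn contexts (lists of types). -/
inductive Typing : List (Ty Loc Ch) → Tm Loc Ch → Ty Loc Ch → Prop where
  | var (Γ : List (Ty Loc Ch)) (n : ℕ) (t : Ty Loc Ch) (h : Γ[n]? = some t) :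
      Typing Γ (.var n) t
  | choice (Γ : List (Ty Loc Ch)) (i : Ch) :
      Typing Γ (.choice i) (.arr memNil (sumSingle i memNil))
  | push (Γ : List (Ty Loc Ch)) (N : Tm Loc Ch) (r : Ty Loc Ch) (a : Loc)
      (M : Tm Loc Ch) (s : MemTy Loc Ch) (T : SumTy Loc Ch) :
      Typing Γ N r → Typing Γ M (.arr (memCons a r s) T) →
      Typing Γ (.push N a M) (.arr s T)
  | pop (Γ : List (Ty Loc Ch)) (r : Ty Loc Ch) (a : Loc) (M : Tm Loc Ch)
      (s : MemTy Loc Ch) (T : SumTy Loc Ch) :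
      Typing (r :: Γ) M (.arr s T) →
      Typing Γ (.pop a M) (.arr (memCons a r s) T)
  | caseOf (Γ : List (Ty Loc Ch)) (M N : Tm Loc Ch) (i : Ch)
      (r s : MemTy Loc Ch) (T : SumTy Loc Ch) :
      Typing Γ M (.arr r (Function.update T i (some s))) →
      Typing Γ N (.arr s T) →
      Typing Γ (.caseOf M i N) (.arr r T)
  | loop (Γ : List (Ty Loc Ch)) (M : Tm Loc Ch) (i : Ch)
      (s : MemTy Loc Ch) (T : SumTy Loc Ch) (h : T i = none) :
      Typing Γ M (.arr s (Function.update T i (some s))) →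
      Typing Γ (.loop M i) (.arr s T)
  | expand (Γ : List (Ty Loc Ch)) (M : Tm Loc Ch)
      (r s : MemTy Loc Ch) (T : SumTy Loc Ch) :
      Typing Γ M (.arr r T) →
      Typing Γ M (.arr (memApp r s) (sumExpand s T))
  | incl (Γ : List (Ty Loc Ch)) (M : Tm Loc Ch) (r : MemTy Loc Ch)
      (T U : SumTy Loc Ch) (h : ∀ i, T i = none ∨ U i = none) :
      Typing Γ M (.arr r T) →
      Typing Γ M (.arr r (sumOver T U))

/-- Typing of memories: pointwise typing of the stacks by the stack types. -/
def MemTyped (S : Mem Loc Ch) (r : MemTy Loc Ch) : Prop :=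
  ∀ a, List.Forall₂ (fun M t => Typing [] M t) (S a) (r a)

/-- Typing of continuation stacks `⊢ K : !!s_I => !!t_J`. -/
inductive ContTyped : CStack Loc Ch → SumTy Loc Ch → SumTy Loc Ch → Prop where
  | nil (T : SumTy Loc Ch) : ContTyped [] T T
  | cons (i : Ch) (M : Tm Loc Ch) (r : MemTy Loc Ch) (S T : SumTy Loc Ch) (K : CStack Loc Ch) :
      Typing [] M (.arr r (sumOver S T)) → ContTyped K S T →
      ContTyped ((i, M) :: K) (Function.update S i (some r)) T

/-- Typing of machine states `⊢ (S, M, K) : ε => !!t_J`. -/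
def StateTyped (st : Mem Loc Ch × Tm Loc Ch × CStack Loc Ch) (T : SumTy Loc Ch) : Prop :=
  ∃ (r : MemTy Loc Ch) (S : SumTy Loc Ch),
    MemTyped st.1 r ∧ Typing [] st.2.1 (.arr r (sumOver S T)) ∧ ContTyped st.2.2 S T

/-!
Expansion and inclusion are the only typing rules that are not syntax-directed, and both
commute with every syntax-directed rule, so each term former has a generation lemma up to
them. A transition then only moves typed pieces around: push and pop move a term between the
term position and the memory (pop also needs the substitution lemma), while case and loop move
a branch onto the continuation stack, whose type records the extra summand `i` that a later
choice consumes.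
-/

section MemTy

omit [DecidableEq Ch]

lemma memApp_memCons (a : Loc) (q : Ty Loc Ch) (r s : MemTy Loc Ch) :
    memApp (memCons a q r) s = memCons a q (memApp r s) := by
  funext b
  by_cases h : b = a <;> simp [memApp, memCons, Function.update_apply, h]

lemma memApp_update (a : Loc) (q : StackTy Loc Ch) (r s : MemTy Loc Ch) :
    memApp (Function.update r a q) s = Function.update (memApp r s) a (q ++ s a) := by
  funext b
  by_cases h : b = a <;> simp [memApp, h]

lemma update_memCons_self (a : Loc) (q : Ty Loc Ch) (r : MemTy Loc Ch) :
    Function.update (memCons a q r) a (r a) = r := by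
  simp [memCons]

end MemTy

omit [DecidableEq Loc] [DecidableEq Ch] in
lemma memNil_memApp (r : MemTy Loc Ch) : memApp memNil r = r := rfl

section SumTy

omit [DecidableEq Loc]

lemma sumExpand_update (q : MemTy Loc Ch) (U : SumTy Loc Ch) (i : Ch) (s : MemTy Loc Ch) :
    sumExpand q (Function.update U i (some s))
      = Function.update (sumExpand q U) i (some (memApp s q)) := by
  funext j
  by_cases h : j = i <;> simp [sumExpand, h]

lemma sumOver_update_left (S T : SumTy Loc Ch) (i : Ch) (s : MemTy Loc Ch) :
    sumOver (Function.update S i (some s)) T = Function.update (sumOver S T) i (some s) := by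
  funext j
  by_cases h : j = i <;> simp [sumOver, h]

lemma sumOver_sumSingle (U : SumTy Loc Ch) (i : Ch) (r : MemTy Loc Ch) (h : U i = some r) :
    sumOver (sumSingle i r) (Function.update U i none) = U := by
  funext j
  by_cases hj : j = i
  · subst hj; simp [sumOver, sumSingle, h]
  · simp [sumOver, sumSingle, hj]

end SumTy

namespace Typing

variable {Γ : List (Ty Loc Ch)}

theorem incl_update {M : Tm Loc Ch} {r s : MemTy Loc Ch} {U V : SumTy Loc Ch}
    (hUV : ∀ j, U j = none ∨ V j = none) (i : Ch)
    (h : Typing Γ M (.arr r (Function.update U i (some s)))) :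
    Typing Γ M (.arr r (Function.update (sumOver U V) i (some s))) := by
  -- `V` may also have a summand `i`, so it is cleared there before applying inclusion.
  have hdisj : ∀ j, Function.update U i (some s) j = none ∨ Function.update V i none j = none := by
    intro j
    by_cases hj : j = i
    · subst hj; simp
    · simpa [hj] using hUV j
  convert h.incl _ _ _ _ _ hdisj using 3
  funext j
  by_cases hj : j = i <;> simp [sumOver, hj]

theorem lift {Γ₁ Γ₂ : List (Ty Loc Ch)} {M : Tm Loc Ch} {t : Ty Loc Ch}
    (h : Typing (Γ₁ ++ Γ₂) M t) (s : Ty Loc Ch) :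
    Typing (Γ₁ ++ s :: Γ₂) (M.lift Γ₁.length) t := by
  generalize hΓ : Γ₁ ++ Γ₂ = Γ at h
  induction h generalizing Γ₁ with subst hΓ
  | var _ n _ hn =>
    unfold Tm.lift
    split_ifs <;> exact Typing.var _ _ _ (by grind)
  | choice => exact .choice _ _
  | push _ _ _ _ _ _ _ _ _ ihN ihM => exact .push _ _ _ _ _ _ _ (ihN rfl) (ihM rfl)
  | pop _ r _ _ _ _ _ ih => exact .pop _ _ _ _ _ _ (ih (Γ₁ := r :: Γ₁) rfl)
  | caseOf _ _ _ _ _ _ _ _ _ ihM ihN => exact .caseOf _ _ _ _ _ _ _ (ihM rfl) (ihN rfl)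
  | loop _ _ _ _ _ hi _ ih => exact .loop _ _ _ _ _ hi (ih rfl)
  | expand _ _ _ _ _ _ ih => exact .expand _ _ _ _ _ (ih rfl)
  | incl _ _ _ _ _ hd _ ih => exact .incl _ _ _ _ _ hd (ih rfl)

theorem subst {Γ₁ Γ₂ : List (Ty Loc Ch)} {M N : Tm Loc Ch} {r t : Ty Loc Ch}
    (hM : Typing (Γ₁ ++ r :: Γ₂) M t) (hN : Typing (Γ₁ ++ Γ₂) N r) :
    Typing (Γ₁ ++ Γ₂) (M.subst Γ₁.length N) t := by
  generalize hΓ : Γ₁ ++ r :: Γ₂ = Γ at hM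
  induction hM generalizing Γ₁ N with subst hΓ
  | var _ n _ hn =>
    unfold Tm.subst
    split_ifs with heq
    · obtain rfl : r = _ := by simpa [heq] using hn
      exact hN
    all_goals exact Typing.var _ _ _ (by grind)
  | choice => exact .choice _ _
  | push _ _ _ _ _ _ _ _ _ ihP ihM => exact .push _ _ _ _ _ _ _ (ihP hN rfl) (ihM hN rfl)
  | pop _ q _ _ _ _ _ ih => exact .pop _ _ _ _ _ _ (ih (Γ₁ := q :: Γ₁) (hN.lift (Γ₁ := []) q) rfl)
  | caseOf _ _ _ _ _ _ _ _ _ ihM ihP => exact .caseOf _ _ _ _ _ _ _ (ihM hN rfl) (ihP hN rfl)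
  | loop _ _ _ _ _ hi _ ih => exact .loop _ _ _ _ _ hi (ih hN rfl)
  | expand _ _ _ _ _ _ ih => exact .expand _ _ _ _ _ (ih hN rfl)
  | incl _ _ _ _ _ hd _ ih => exact .incl _ _ _ _ _ hd (ih hN rfl)

theorem push_inv {N M : Tm Loc Ch} {a : Loc} {s : MemTy Loc Ch} {U : SumTy Loc Ch}
    (h : Typing Γ (.push N a M) (.arr s U)) :
    ∃ r, Typing Γ N r ∧ Typing Γ M (.arr (memCons a r s) U) := by
  generalize hP : Tm.push N a M = P, ht : Ty.arr s U = t at h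
  induction h generalizing s U with
  | push _ _ r _ _ _ _ hN hM => cases hP; cases ht; exact ⟨r, hN, hM⟩
  | expand _ _ _ s' _ _ ih =>
    cases ht
    obtain ⟨r, hN, hM⟩ := ih hP rfl
    refine ⟨r, hN, ?_⟩
    rw [← memApp_memCons]
    exact hM.expand _ _ _ s' _
  | incl _ _ _ _ _ hd _ ih =>
    cases ht
    obtain ⟨r, hN, hM⟩ := ih hP rfl
    exact ⟨r, hN, hM.incl _ _ _ _ _ hd⟩
  | _ => cases hP

theorem pop_inv {M : Tm Loc Ch} {a : Loc} {r : MemTy Loc Ch} {U : SumTy Loc Ch}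
    (h : Typing Γ (.pop a M) (.arr r U)) :
    ∃ q rest, r a = q :: rest ∧ Typing (q :: Γ) M (.arr (Function.update r a rest) U) := by
  generalize hP : Tm.pop a M = P, ht : Ty.arr r U = t at h
  induction h generalizing r U with
  | pop _ q _ _ s _ hM =>
    cases hP; cases ht
    exact ⟨q, s a, by simp [memCons], by rwa [update_memCons_self]⟩
  | expand _ _ _ s _ _ ih =>
    cases ht
    obtain ⟨q, rest, hr, hM⟩ := ih hP rfl
    refine ⟨q, rest ++ s a, by simp [memApp, hr], ?_⟩
    rw [← memApp_update]
    exact hM.expand _ _ _ s _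
  | incl _ _ _ _ _ hd _ ih =>
    cases ht
    obtain ⟨q, rest, hr, hM⟩ := ih hP rfl
    exact ⟨q, rest, hr, hM.incl _ _ _ _ _ hd⟩
  | _ => cases hP

theorem choice_iff {i : Ch} {r : MemTy Loc Ch} {U : SumTy Loc Ch} :
    Typing Γ (.choice i) (.arr r U) ↔ U i = some r := by
  constructor
  · intro h
    generalize hP : Tm.choice i = P, ht : Ty.arr r U = t at h
    induction h generalizing r U with
    | choice => cases hP; cases ht; simp [sumSingle]
    | expand _ _ _ _ _ _ ih => cases ht; simp [sumExpand, ih hP rfl]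
    | incl _ _ _ _ _ _ _ ih => cases ht; simp [sumOver, ih hP rfl]
    | _ => cases hP
  · intro h
    have hsingle : sumExpand r (sumSingle i memNil) = sumSingle i r := by
      funext j
      by_cases hj : j = i <;> simp [sumExpand, sumSingle, hj, memNil_memApp]
    have hr : Typing Γ (.choice i) (.arr r (sumSingle i r)) :=
      hsingle ▸ (Typing.choice Γ i).expand _ _ _ r _
    rw [← sumOver_sumSingle U i r h]
    refine hr.incl _ _ _ _ _ fun j => ?_
    by_cases hj : j = i <;> simp [sumSingle, hj]

theorem caseOf_inv {M N : Tm Loc Ch} {i : Ch} {r : MemTy Loc Ch} {U : SumTy Loc Ch}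
    (h : Typing Γ (.caseOf M i N) (.arr r U)) :
    ∃ s, Typing Γ M (.arr r (Function.update U i (some s))) ∧ Typing Γ N (.arr s U) := by
  generalize hP : Tm.caseOf M i N = P, ht : Ty.arr r U = t at h
  induction h generalizing r U with
  | caseOf _ _ _ _ _ s _ hM hN => cases hP; cases ht; exact ⟨s, hM, hN⟩
  | expand _ _ _ q _ _ ih =>
    cases ht
    obtain ⟨s, hM, hN⟩ := ih hP rfl
    refine ⟨memApp s q, ?_, hN.expand _ _ _ q _⟩
    rw [← sumExpand_update]
    exact hM.expand _ _ _ q _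
  | incl _ _ _ _ _ hd _ ih =>
    cases ht
    obtain ⟨s, hM, hN⟩ := ih hP rfl
    exact ⟨s, hM.incl_update hd i, hN.incl _ _ _ _ _ hd⟩
  | _ => cases hP

theorem loop_inv {M : Tm Loc Ch} {i : Ch} {r : MemTy Loc Ch} {U : SumTy Loc Ch}
    (h : Typing Γ (.loop M i) (.arr r U)) :
    Typing Γ M (.arr r (Function.update U i (some r))) := by
  generalize hP : Tm.loop M i = P, ht : Ty.arr r U = t at h
  induction h generalizing r U with
  | loop _ _ _ _ _ _ hM => cases hP; cases ht; exact hM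
  | expand _ _ _ q _ _ ih =>
    cases ht
    rw [← sumExpand_update]
    exact (ih hP rfl).expand _ _ _ q _
  | incl _ _ _ _ _ hd _ ih => cases ht; exact (ih hP rfl).incl_update hd i
  | _ => cases hP

end Typing

section Mem

omit [DecidableEq Ch]

@[simp]
theorem Mem.push_apply_self (S : Mem Loc Ch) (a : Loc) (N : Tm Loc Ch) :
    S.push a N a = N :: S a :=
  Function.update_self ..

theorem Mem.push_apply_of_ne (S : Mem Loc Ch) {a b : Loc} (N : Tm Loc Ch) (h : b ≠ a) :
    S.push a N b = S b :=
  Function.update_of_ne h ..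

end Mem

theorem MemTyped.push {S : Mem Loc Ch} {r : MemTy Loc Ch} {N : Tm Loc Ch} {t : Ty Loc Ch}
    (hS : MemTyped S r) (hN : Typing [] N t) (a : Loc) :
    MemTyped (S.push a N) (memCons a t r) := by
  intro b
  by_cases hb : b = a
  · subst hb
    simpa [memCons] using List.Forall₂.cons hN (hS b)
  · simpa [Mem.push_apply_of_ne _ _ hb, memCons, hb] using hS b

theorem MemTyped.of_push {S : Mem Loc Ch} {a : Loc} {N : Tm Loc Ch} {r : MemTy Loc Ch}
    (h : MemTyped (S.push a N) r) :
    ∃ t rest, r a = t :: rest ∧ Typing [] N t ∧ MemTyped S (Function.update r a rest) := by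
  obtain ⟨t, rest, hN, hS, hr⟩ := List.forall₂_cons_left_iff.mp (by simpa using h a)
  refine ⟨t, rest, hr, hN, fun b => ?_⟩
  by_cases hb : b = a
  · subst hb; simpa using hS
  · simpa [Mem.push_apply_of_ne _ _ hb, hb] using h b

/-- Machine evaluation preserves types. -/
theorem machine_preserves_types (S S' : Mem Loc Ch) (M M' : Tm Loc Ch)
    (K K' : CStack Loc Ch) (T : SumTy Loc Ch)
    (hty : StateTyped (S, M, K) T) (h : MStep (S, M, K) (S', M', K')) :
    StateTyped (S', M', K') T := by
  obtain ⟨r, U, hS, hM, hK⟩ := hty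
  cases h with
  | push _ _ a =>
    obtain ⟨q, hN, hM'⟩ := hM.push_inv
    exact ⟨memCons a q r, U, hS.push hN a, hM', hK⟩
  | pop =>
    obtain ⟨t, rest, hr, hN, hS'⟩ := hS.of_push
    obtain ⟨t', rest', hr', hM'⟩ := hM.pop_inv
    obtain ⟨rfl, rfl⟩ := List.cons_eq_cons.mp (hr.symm.trans hr')
    exact ⟨_, U, hS', hM'.subst (Γ₁ := []) hN, hK⟩
  | select =>
    cases hK with
    | cons _ _ q U' _ _ hL hK' =>
      obtain rfl : q = r := by simpa [sumOver_update_left] using Typing.choice_iff.mp hM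
      exact ⟨q, U', hS, hL, hK'⟩
  | reject _ i _ _ _ hij =>
    cases hK with
    | cons _ _ _ U' _ _ _ hK' =>
      have hr : sumOver U' T i = some r := by
        simpa [sumOver_update_left, hij] using Typing.choice_iff.mp hM
      exact ⟨r, U', hS, Typing.choice_iff.mpr hr, hK'⟩
  | caseOf _ _ i L =>
    obtain ⟨s, hM', hL⟩ := hM.caseOf_inv
    refine ⟨r, Function.update U i (some s), hS, ?_, .cons i L s U T K hL hK⟩
    rwa [sumOver_update_left]
  | loop _ _ i =>
    refine ⟨r, Function.update U i (some r), hS, ?_, .cons i _ r U T K hM hK⟩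
    rw [sumOver_update_left]
    exact hM.loop_inv
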